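/- arXiv:1707.03947 — 4 statements merged into one kernel-verified Lean document; each statement's English description precedes it below -/
import Mathlib

section
/- There exists a set R ⊆ ℕ such that both R and its complement ℕ \ R are canonically immune (R is bi-canonically immune). -/
/-- The `e`-th computably enumerable set. -/
def WSet (e : ℕ) : Set ℕ := {n | ((Denumerable.ofNat Nat.Partrec.Code e).eval n).Dom}

/-- A canonical numbering: a computable surjection onto the finite subsets of `ℕ`. -/
def CanonicalNumbering (D : ℕ → Finset ℕ) : Prop := Computable D ∧ Function.Surjective D

/-- `R` is canonically immune with modulus of immunity `h`. -/
def CanonImmuneMod (R : Set ℕ) (h : ℕ → ℕ) : Prop :=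
  R.Infinite ∧ ∀ D : ℕ → Finset ℕ, CanonicalNumbering D →
    ∀ᶠ i in Filter.atTop, ↑(D i) ⊆ R → (D i).card ≤ h i

/-- `R` is canonically immune. -/
def CanonicallyImmune (R : Set ℕ) : Prop :=
  ∃ h : ℕ → ℕ, Computable h ∧ CanonImmuneMod R h

/-- `R` is Δ⁰₂ (limit computable). -/
def Delta02 (R : Set ℕ) : Prop :=
  ∃ f : ℕ → ℕ → Bool, Computable₂ f ∧
    ∀ n, ∀ᶠ s in Filter.atTop, (f s n = true ↔ n ∈ R)

/-- Partial functions recursive in an oracle `O : ℕ → ℕ`. -/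
inductive OracleRecursiveIn (O : ℕ → ℕ) : (ℕ →. ℕ) → Prop
  | zero : OracleRecursiveIn O fun _ => 0
  | succ : OracleRecursiveIn O fun n => Part.some (n + 1)
  | left : OracleRecursiveIn O fun n => Part.some (Nat.unpair n).1
  | right : OracleRecursiveIn O fun n => Part.some (Nat.unpair n).2
  | oracle : OracleRecursiveIn O fun n => Part.some (O n)
  | pair {f g} : OracleRecursiveIn O f → OracleRecursiveIn O g →
      OracleRecursiveIn O fun n => Nat.pair <$> f n <*> g n
  | comp {f g} : OracleRecursiveIn O f → OracleRecursiveIn O g →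
      OracleRecursiveIn O fun n => g n >>= f
  | prec {f g} : OracleRecursiveIn O f → OracleRecursiveIn O g →
      OracleRecursiveIn O (Nat.unpaired fun a n =>
        n.rec (f a) fun y IH => do let i ← IH; g (Nat.pair a (Nat.pair y i)))
  | rfind {f} : OracleRecursiveIn O f →
      OracleRecursiveIn O fun a => Nat.rfind fun n => (fun m => m = 0) <$> f (Nat.pair a n)

open Classical in
/-- Characteristic function of a set of naturals. -/
noncomputable def chi (A : Set ℕ) : ℕ → ℕ := fun n => if n ∈ A then 1 else 0

/-- `A` is Turing reducible to the oracle `O`. -/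
def TuringReducibleTo (A : Set ℕ) (O : ℕ → ℕ) : Prop :=
  OracleRecursiveIn O fun n => Part.some (chi A n)

/-- `A` is Turing reducible to the set `B`. -/
def TuringReducibleSet (A B : Set ℕ) : Prop := TuringReducibleTo A (chi B)

/-- The oracle given by a real `G ∈ 2^ω`. -/
def oracleOf (G : ℕ → Bool) : ℕ → ℕ := fun n => cond (G n) 1 0

/-- `S` is computably enumerable relative to the real `G`. -/
def CEIn (G : ℕ → Bool) (S : Set ℕ) : Prop :=
  ∃ f : ℕ →. ℕ, OracleRecursiveIn (oracleOf G) f ∧ S = {n | (f n).Dom}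

/-- The length-`n` initial segment of a real. -/
def initSeg (G : ℕ → Bool) (n : ℕ) : List Bool := List.ofFn fun i : Fin n => G i

/-- A Σ⁰₂ set of binary strings. -/
def Sigma02Strings (X : Set (List Bool)) : Prop :=
  ∃ p : List Bool → ℕ → ℕ → Bool,
    (Computable fun x : List Bool × ℕ × ℕ => p x.1 x.2.1 x.2.2) ∧
    X = {σ | ∃ m, ∀ k, p σ m k = true}

/-- A (Cohen) 2-generic real. -/
def TwoGeneric (G : ℕ → Bool) : Prop :=
  ∀ X : Set (List Bool), Sigma02Strings X →
    (∃ n, initSeg G n ∈ X) ∨ (∃ n, ∀ τ, initSeg G n <+: τ → τ ∉ X)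

/-- A computably enumerable set of binary strings. -/
def CEStrings (X : Set (List Bool)) : Prop :=
  ∃ p : List Bool → ℕ → Bool, Computable₂ p ∧ X = {σ | ∃ s, p σ s = true}

/-- A dense set of binary strings. -/
def DenseStrings (X : Set (List Bool)) : Prop := ∀ σ, ∃ τ, σ <+: τ ∧ τ ∈ X

/-- A weakly 1-generic real. -/
def Weakly1Generic (G : ℕ → Bool) : Prop :=
  ∀ X : Set (List Bool), CEStrings X → DenseStrings X → ∃ n, initSeg G n ∈ X

/-- A hyperimmune set: infinite and its increasing enumeration (principal function)
is not dominated by any computable function. -/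
def Hyperimmune (R : Set ℕ) : Prop :=
  R.Infinite ∧ ∀ f : ℕ → ℕ, Computable f →
    ∃ᶠ n in Filter.atTop, f n < Nat.nth (· ∈ R) n

/-- A (computable) Mathias condition `[a, A]`. -/
structure MathiasCond where
  a : Finset ℕ
  A : Set ℕ
  infinite : A.Infinite
  comp : ComputablePred (· ∈ A)
  lt : ∀ x ∈ a, ∀ y ∈ A, x < y

/-- `c'` extends `c` as a Mathias condition. -/
def MathiasCond.Extends (c' c : MathiasCond) : Prop :=
  c.a ⊆ c'.a ∧ (↑c'.a \ ↑c.a : Set ℕ) ⊆ c.A ∧ c'.A ⊆ c.A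

/-- A dense family of Mathias conditions. -/
def MathiasDense (𝒳 : Set MathiasCond) : Prop := ∀ c, ∃ c' ∈ 𝒳, c'.Extends c

/-- `R ∈ [a, A]`. -/
def MathiasCond.Mem (c : MathiasCond) (R : Set ℕ) : Prop :=
  ↑c.a ⊆ R ∧ R ⊆ ↑c.a ∪ c.A

/-- `R` meets the family `𝒳` of Mathias conditions. -/
def Meets (R : Set ℕ) (𝒳 : Set MathiasCond) : Prop := ∃ c ∈ 𝒳, c.Mem R

/-- The arithmetical sets of naturals: closure of the computable sets under
complementation and projection. -/
inductive Arithmetical : Set ℕ → Prop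
  | of_computable {S : Set ℕ} : ComputablePred (· ∈ S) → Arithmetical S
  | compl {S : Set ℕ} : Arithmetical S → Arithmetical {n | n ∉ S}
  | proj {S : Set ℕ} : Arithmetical S → Arithmetical {n | ∃ m, Nat.pair n m ∈ S}

open Classical in
/-- `n` codes the Mathias condition `c`: its first component is the canonical code of the
finite set and its second component is an index for the characteristic function of `A`. -/
noncomputable def CondCode (n : ℕ) (c : MathiasCond) : Prop :=
  n.unpair.1 = Encodable.encode c.a ∧
  ∀ x, ((Denumerable.ofNat Nat.Partrec.Code n.unpair.2)).eval x = Part.some (if x ∈ c.A then 1 else 0)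

/-- The set of codes of members of `𝒳`. -/
def CodesOf (𝒳 : Set MathiasCond) : Set ℕ := {n | ∃ c ∈ 𝒳, CondCode n c}

/-- A Mathias generic real: one meeting every arithmetically definable dense family
of Mathias conditions. -/
def MathiasGeneric (R : Set ℕ) : Prop :=
  ∀ 𝒳 : Set MathiasCond, Arithmetical (CodesOf 𝒳) → MathiasDense 𝒳 → Meets R 𝒳

/-- A Σ⁰₃ set of naturals. -/
def Sigma03Set (S : Set ℕ) : Prop :=
  ∃ p : ℕ → ℕ → ℕ → ℕ → Bool,
    (Computable fun x : ℕ × ℕ × ℕ × ℕ => p x.1 x.2.1 x.2.2.1 x.2.2.2) ∧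
    S = {n | ∃ a, ∀ b, ∃ c, p n a b c = true}

/-- A Mathias 3-generic real. -/
def Mathias3Generic (R : Set ℕ) : Prop :=
  ∀ 𝒳 : Set MathiasCond, Sigma03Set (CodesOf 𝒳) → MathiasDense 𝒳 → Meets R 𝒳

/-- An effectively immune set. -/
def EffectivelyImmune (Q : Set ℕ) : Prop :=
  Q.Infinite ∧ ∃ h : ℕ → ℕ, Computable h ∧
    ∀ e, WSet e ⊆ Q → (WSet e).Finite ∧ (WSet e).ncard ≤ h e

/-- The basic cylinder of 2^ω determined by the finite string `σ`. -/
def Cyl (σ : List Bool) : Set (ℕ → Bool) := {G | ∀ i : Fin σ.length, G i = σ.get i}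

/-- The open subset of 2^ω generated by a set of strings. -/
def OpenFrom (P : Set (List Bool)) : Set (ℕ → Bool) := ⋃ σ ∈ P, Cyl σ

/-- A uniformly c.e. sequence of sets of strings. -/
def UniformlyCE (P : ℕ → Set (List Bool)) : Prop :=
  ∃ f : ℕ → List Bool → ℕ → Bool,
    (Computable fun x : ℕ × List Bool × ℕ => f x.1 x.2.1 x.2.2) ∧
    ∀ n σ, σ ∈ P n ↔ ∃ s, f n σ s = true

/-- `μ` is the uniform (fair-coin) product measure on 2^ω: every basic cylinder
determined by a string of length `l` has measure `2⁻ˡ`. -/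
def IsFairCoin (μ : MeasureTheory.Measure (ℕ → Bool)) : Prop :=
  ∀ σ : List Bool, μ (Cyl σ) = (2 ^ σ.length : ENNReal)⁻¹

/-- A Schnorr test with respect to the measure `μ`: uniformly c.e. open sets with
uniformly computable measures bounded by `2^{-n}`. -/
def SchnorrTest (μ : MeasureTheory.Measure (ℕ → Bool)) (U : ℕ → Set (ℕ → Bool)) : Prop :=
  (∃ P : ℕ → Set (List Bool), UniformlyCE P ∧ ∀ n, U n = OpenFrom (P n)) ∧
  (∃ q : ℕ → ℕ → ℚ, Computable₂ q ∧
    ∀ n k, |(q n k : ℝ) - (μ (U n)).toReal| ≤ (2 : ℝ)⁻¹ ^ k) ∧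
  ∀ n, μ (U n) ≤ (2 ^ n : ENNReal)⁻¹

/-- A Schnorr random real (with respect to the fair-coin measure `μ`). -/
def SchnorrRandom (μ : MeasureTheory.Measure (ℕ → Bool)) (G : ℕ → Bool) : Prop :=
  ∀ U : ℕ → Set (ℕ → Bool), SchnorrTest μ U → G ∉ ⋂ n, U n

open Classical in
/-- The characteristic sequence of a set of naturals, as a point of 2^ω. -/
noncomputable def chiB (R : Set ℕ) : ℕ → Bool := fun n => decide (n ∈ R)

/-!
A random set is bi-canonically immune, with modulus `h = id`. If each `n` is put into `R`
by an independent fair coin, then `D i ⊆ R` (or `D i ⊆ Rᶜ`) with `i < |D i|` has probability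
below `2⁻ⁱ`, so by Borel–Cantelli it happens for only finitely many `i`, almost surely.
There are only countably many computable `D`, so almost surely this holds for all of them
at once; applied to `D i = [i, 2i]` it also makes `R` and `Rᶜ` infinite.
-/

open MeasureTheory Filter

instance : Countable {D : ℕ → Finset ℕ // Computable D} :=
  Function.Injective.countable
    (f := fun D => (⟨_, Computable.encode.comp D.2⟩ : {f : ℕ → ℕ // Computable f}))
    fun _ _ h => Subtype.ext <| funext fun n =>
      -- `Computable` encodes `Finset ℕ` through `Primcodable`, not through `Finset.encodable`
      @Encodable.encode_injective _ Primcodable.toEncodable _ _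
        (congrFun (congrArg Subtype.val h) n)

noncomputable def fairCoin : Measure (ℕ → Bool) :=
  Measure.infinitePi fun _ => (PMF.uniformOfFintype Bool).toMeasure

instance : IsProbabilityMeasure fairCoin := by
  unfold fairCoin; infer_instance

lemma fairCoin_forall_mem_eq (F : Finset ℕ) (b : Bool) :
    fairCoin {x | ∀ n ∈ F, x n = b} = 2⁻¹ ^ F.card := by
  have hpi : {x : ℕ → Bool | ∀ n ∈ F, x n = b} = Set.pi ↑F fun _ => {b} := by
    ext x; simp
  rw [hpi, fairCoin, Measure.infinitePi_pi _ fun _ _ => measurableSet_singleton b]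
  simp [PMF.uniformOfFintype_apply]

lemma ae_eventually_card_le_of_forall_mem_eq (D : ℕ → Finset ℕ) (b : Bool) :
    ∀ᵐ x ∂fairCoin, ∀ᶠ i in atTop, (∀ n ∈ D i, x n = b) → (D i).card ≤ i := by
  set bad : ℕ → Set (ℕ → Bool) := fun i => {x | i < (D i).card ∧ ∀ n ∈ D i, x n = b}
  have hbad : ∀ i, fairCoin (bad i) ≤ 2⁻¹ ^ i := by
    intro i
    by_cases hi : i < (D i).card
    · calc fairCoin (bad i) ≤ fairCoin {x | ∀ n ∈ D i, x n = b} :=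
            measure_mono fun x hx => hx.2
        _ = 2⁻¹ ^ (D i).card := fairCoin_forall_mem_eq _ _
        _ ≤ 2⁻¹ ^ i :=
            pow_le_pow_of_le_one (by positivity) (ENNReal.inv_le_one.2 one_le_two) hi.le
    · simp [bad, hi]
  have hsum : ∑' i, fairCoin (bad i) ≠ ⊤ :=
    ne_top_of_le_ne_top (by simp [ENNReal.tsum_geometric, ENNReal.one_sub_inv_two])
      (ENNReal.tsum_le_tsum hbad)
  filter_upwards [ae_eventually_notMem hsum] with x hx
  filter_upwards [hx] with i hi hsub
  exact not_lt.1 fun hlt => hi ⟨hlt, hsub⟩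

lemma ae_infinite_setOf_eq (b : Bool) : ∀ᵐ x ∂fairCoin, {n | x n = b}.Infinite := by
  filter_upwards [ae_eventually_card_le_of_forall_mem_eq (fun i => Finset.Icc i (2 * i)) !b]
    with x hx
  refine Nat.frequently_atTop_iff_infinite.1 (frequently_atTop.2 fun a => ?_)
  obtain ⟨i, hi⟩ := (hx.and (eventually_ge_atTop a)).exists
  obtain ⟨n, hn, hxn⟩ : ∃ n ∈ Finset.Icc i (2 * i), x n ≠ !b := by
    by_contra! hall
    have hcard := hi.1 hall
    simp only [Nat.card_Icc] at hcard
    omega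
  exact ⟨n, hi.2.trans (Finset.mem_Icc.1 hn).1, by simpa using hxn⟩

lemma canonicallyImmune_of_eventually_card_le {R : Set ℕ} (hR : R.Infinite)
    (h : ∀ D : ℕ → Finset ℕ, Computable D → ∀ᶠ i in atTop, ↑(D i) ⊆ R → (D i).card ≤ i) :
    CanonicallyImmune R :=
  ⟨id, Computable.id, hR, fun D hD => h D hD.1⟩

lemma ae_canonicallyImmune_setOf_eq (b : Bool) :
    ∀ᵐ x ∂fairCoin, CanonicallyImmune {n | x n = b} := by
  have hall : ∀ᵐ x ∂fairCoin, ∀ D : {D : ℕ → Finset ℕ // Computable D},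
      ∀ᶠ i in atTop, (∀ n ∈ D.1 i, x n = b) → (D.1 i).card ≤ i :=
    ae_all_iff.2 fun D => ae_eventually_card_le_of_forall_mem_eq D.1 b
  filter_upwards [hall, ae_infinite_setOf_eq b] with x hx hinf
  exact canonicallyImmune_of_eventually_card_le hinf fun D hD => hx ⟨D, hD⟩

/-- There is a bi-canonically immune set. -/
theorem exists_bi_canonically_immune :
    ∃ R : Set ℕ, CanonicallyImmune R ∧ CanonicallyImmune Rᶜ := by
  obtain ⟨x, hR, hRc⟩ :=
    ((ae_canonicallyImmune_setOf_eq true).and (ae_canonicallyImmune_setOf_eq false)).exists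
  refine ⟨{n | x n = true}, hR, ?_⟩
  convert hRc using 2
  ext n
  simp
end

section
/- For every canonical numbering D, the set of Mathias conditions X_D = { [a,A] : for all i ≥ |a|, D(i) ⊆ a ∪ A implies |D(i)| ≤ i } is dense in the computable Mathias forcing partial order. -/
namespace Denumerable

theorem le_encode_add_of_mem_raise' :
    ∀ {l : List ℕ} {n x : ℕ}, x ∈ raise' l n → x ≤ Encodable.encode l + n
  | [], _, _, hx => by simp [raise'] at hx
  | m :: l, n, x, hx => by
    have hpair := Nat.add_le_pair m (Encodable.encode l)
    simp only [raise', List.mem_cons, Encodable.encode_list_cons, Encodable.encode_nat] at hx ⊢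
    rcases hx with rfl | hx
    · omega
    · have := le_encode_add_of_mem_raise' hx
      omega

theorem le_eqv_finset_of_mem {s : Finset ℕ} {x : ℕ} (hx : x ∈ s) :
    x ≤ eqv (Finset ℕ) s := by
  rw [← ofNat_encode s] at hx
  obtain ⟨y, hy, rfl⟩ := Finset.mem_map.1 hx
  simpa [eqv, ofNat_nat] using le_encode_add_of_mem_raise' (Multiset.mem_coe.1 hy)

end Denumerable

theorem Computable.partialSups {f : ℕ → ℕ} (hf : Computable f) : Computable (partialSups f) := by
  refine (Computable.nat_rec (f := id) (g := fun _ : ℕ => f 0)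
    (h := fun _ (p : ℕ × ℕ) => max p.2 (f (p.1 + 1))) Computable.id (Computable.const _) ?_).of_eq
    fun k => ?_
  · exact Computable₂.mk <| Primrec.nat_max.to_comp.comp (Computable.snd.comp Computable.snd)
      (hf.comp <| Primrec.succ.to_comp.comp (Computable.fst.comp Computable.snd))
  · induction k with
    | zero => simp
    | succ k ih =>
      rw [← Order.succ_eq_add_one, partialSups_succ, ← ih]
      rfl

section Thinning

variable (χ : ℕ → Bool) (g : ℕ → ℕ)

/-- Greedy thinning of `{x | χ x}` against `g`: `x` is kept when `χ x` holds and `x` exceeds `g`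
of the number of elements kept before it; `thinCount χ g x` is the number kept below `x`. -/
def thinCount : ℕ → ℕ
  | 0 => 0
  | x + 1 => thinCount x + cond (χ x && decide (g (thinCount x) < x)) 1 0

def thinSel (x : ℕ) : Bool := χ x && decide (g (thinCount χ g x) < x)

variable {χ g}

theorem thinCount_succ (x : ℕ) :
    thinCount χ g (x + 1) = thinCount χ g x + cond (thinSel χ g x) 1 0 := rfl

theorem thinCount_monotone : Monotone (thinCount χ g) :=
  monotone_nat_of_le_succ fun x => by rw [thinCount_succ]; omega

theorem thinCount_lt_of_thinSel {x y : ℕ} (hx : thinSel χ g x) (hxy : x < y) :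
    thinCount χ g x < thinCount χ g y := by
  have hsucc : thinCount χ g (x + 1) = thinCount χ g x + 1 := by rw [thinCount_succ, hx]; rfl
  have := thinCount_monotone (χ := χ) (g := g) (show x + 1 ≤ y by omega)
  omega

theorem thinCount_eq_of_forall_ge {n : ℕ} (h : ∀ x, n ≤ x → thinSel χ g x = false) :
    ∀ y, n ≤ y → thinCount χ g y = thinCount χ g n :=
  Nat.le_induction rfl fun y hy ih => by rw [thinCount_succ, h y hy, ih]; rfl

theorem infinite_setOf_thinSel (hχ : {x | χ x}.Infinite) : {x | thinSel χ g x}.Infinite := by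
  refine Set.infinite_of_forall_exists_gt fun N => ?_
  by_contra! hN
  have hcount := thinCount_eq_of_forall_ge (χ := χ) (g := g) (n := N + 1)
    fun x hx => by simpa using mt (hN x) (by omega)
  obtain ⟨x, hχx, hx⟩ := hχ.exists_gt (max N (g (thinCount χ g (N + 1))))
  have hsel : thinSel χ g x := by
    simp only [thinSel, hcount x (by omega), Bool.and_eq_true, decide_eq_true_eq]
    exact ⟨hχx, by omega⟩
  exact absurd (hN x hsel) (by omega)

/-- The `j`-th kept element exceeds `g j ≥ g k` once `j ≥ k`. -/
theorem card_le_of_forall_thinSel (hg : Monotone g) {k : ℕ} {s : Finset ℕ}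
    (hs : ∀ x ∈ s, thinSel χ g x ∧ x ≤ g k) : s.card ≤ k := by
  have hinj : Set.InjOn (thinCount χ g) s := fun x hx y hy hxy => by
    by_contra hne
    rcases Nat.lt_or_gt_of_ne hne with hlt | hlt
    · exact (thinCount_lt_of_thinSel (hs x hx).1 hlt).ne hxy
    · exact (thinCount_lt_of_thinSel (hs y hy).1 hlt).ne hxy.symm
  have hmaps : Set.MapsTo (thinCount χ g) s (Finset.range k) := fun x hx => by
    have hsel := (hs x hx).1
    simp only [thinSel, Bool.and_eq_true, decide_eq_true_eq] at hsel
    by_contra! hk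
    have := hg (Finset.mem_range.not.1 hk |> not_lt.1)
    have := (hs x hx).2
    omega
  simpa using Finset.card_le_card_of_injOn _ hmaps hinj

theorem Computable.thinCount (hχ : Computable χ) (hg : Computable g) :
    Computable (thinCount χ g) := by
  refine (Computable.nat_rec (f := id) (g := fun _ : ℕ => 0)
    (h := fun _ (p : ℕ × ℕ) => p.2 + _root_.cond (χ p.1 && decide (g p.2 < p.1)) 1 0)
    Computable.id (Computable.const 0) ?_).of_eq fun x => ?_
  · have hsel : Computable fun p : ℕ × ℕ => χ p.1 && decide (g p.2 < p.1) :=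
      (Primrec.dom_bool₂ (· && ·)).to_comp.comp (hχ.comp .fst)
        (Primrec.nat_lt.decide.to_comp.comp (hg.comp .snd) .fst)
    exact Computable₂.mk <| Primrec.nat_add.to_comp.comp (Computable.snd.comp .snd)
      (Computable.cond (hsel.comp .snd) (.const 1) (.const 0))
  · induction x with
    | zero => rfl
    | succ x ih => simp only [_root_.thinCount, ← ih]; rfl

theorem Computable.thinSel (hχ : Computable χ) (hg : Computable g) :
    Computable (thinSel χ g) :=
  (Primrec.dom_bool₂ (· && ·)).to_comp.comp hχ
    (Primrec.nat_lt.decide.to_comp.comp (hg.comp (hχ.thinCount hg)) .id)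

end Thinning

theorem exists_subset_infinite_computable_card_le {A : Set ℕ} (hA : A.Infinite)
    (hAc : ComputablePred (· ∈ A)) {f : ℕ → ℕ} (hf : Computable f) :
    ∃ B ⊆ A, B.Infinite ∧ ComputablePred (· ∈ B) ∧
      ∀ k (s : Finset ℕ), ↑s ⊆ B → (∀ x ∈ s, x ≤ f k) → s.card ≤ k := by
  obtain ⟨χ, hχ, hAχ⟩ := ComputablePred.computable_iff.1 hAc
  obtain rfl : A = {x | χ x} := Set.ext fun x => Iff.of_eq (congrFun hAχ x)
  refine ⟨{x | thinSel χ (partialSups f) x}, fun x hx => ?_, infinite_setOf_thinSel hA,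
    ComputablePred.computable_iff.2 ⟨_, hχ.thinSel hf.partialSups, rfl⟩,
    fun k s hsB hsf => card_le_of_forall_thinSel (partialSups f).monotone
      fun x hx => ⟨hsB hx, (hsf x hx).trans (le_partialSups f k)⟩⟩
  simp only [Set.mem_ofPred_eq, thinSel, Bool.and_eq_true] at hx
  exact hx.1

def MathiasCond.shrink (c : MathiasCond) (B : Set ℕ) (hBA : B ⊆ c.A) (hB : B.Infinite)
    (hBc : ComputablePred (· ∈ B)) : MathiasCond :=
  ⟨c.a, B, hB, hBc, fun x hx y hy => c.lt x hx y (hBA hy)⟩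

theorem MathiasCond.shrink_extends (c : MathiasCond) {B : Set ℕ} (hBA : B ⊆ c.A)
    (hB : B.Infinite) (hBc : ComputablePred (· ∈ B)) : (c.shrink B hBA hB hBc).Extends c :=
  ⟨subset_rfl, by simp [shrink], hBA⟩

/-- For each canonical numbering `D`, the family
`X_D = {[a,A] : ∀ i ≥ |a|, D(i) ⊆ a ∪ A → |D(i)| ≤ i}` of Mathias conditions is dense. -/
theorem XD_dense :
    ∀ D : ℕ → Finset ℕ, CanonicalNumbering D →
      MathiasDense {c : MathiasCond |
        ∀ i, c.a.card ≤ i → ↑(D i) ⊆ (↑c.a ∪ c.A : Set ℕ) → (D i).card ≤ i} := by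
  intro D hD c
  have hbound : Computable fun k => Denumerable.eqv (Finset ℕ) (D (c.a.card + k)) :=
    Computable.encode.comp <| hD.1.comp <| Primrec.nat_add.to_comp.comp (.const _) .id
  obtain ⟨B, hBA, hB, hBc, hcard⟩ :=
    exists_subset_infinite_computable_card_le c.infinite c.comp hbound
  refine ⟨c.shrink B hBA hB hBc, ?_, c.shrink_extends hBA hB hBc⟩
  intro i (hi : c.a.card ≤ i) (hsub : ↑(D i) ⊆ ↑c.a ∪ B)
  have hout : (D i \ c.a).card ≤ i - c.a.card := by
    refine hcard _ _ (fun x hx => ?_) fun x hx => ?_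
    · simp only [Finset.coe_sdiff, Set.mem_sdiff, Finset.mem_coe] at hx
      exact (hsub hx.1).resolve_left hx.2
    · rw [Nat.add_sub_cancel' hi]
      exact Denumerable.le_eqv_finset_of_mem (Finset.mem_sdiff.1 hx).1
  calc (D i).card ≤ (D i \ c.a).card + c.a.card := Finset.card_le_card_sdiff_add_card
    _ ≤ i := by omega
end

section
/- Every canonically immune set contains an infinite subset which is both canonically immune and effectively immune. -/
/-!
Canonical immunity passes to infinite subsets with the same modulus, so it suffices to find an
effectively immune subset of an arbitrary infinite set `R`. Enumerate `Q ⊆ R` increasingly as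
`q 0 < q 1 < ⋯`, choosing `q (e + 1)` so large that either some element of `W_e` lies strictly
between `q e` and `q (e + 1)`, or all of `W_e` lies below `q (e + 1)`. The gap contains no element
of `Q`, so `W_e ⊆ Q` forces `W_e ⊆ {q 0, …, q e}`, whence `|W_e| ≤ e + 1`.
-/

open Set

theorem CanonImmuneMod.mono {R Q : Set ℕ} {h : ℕ → ℕ} (hR : CanonImmuneMod R h) (hQR : Q ⊆ R)
    (hQ : Q.Infinite) : CanonImmuneMod Q h :=
  ⟨hQ, fun D hD => (hR.2 D hD).mono fun _ hi hDQ => hi (hDQ.trans hQR)⟩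

theorem CanonicallyImmune.infinite {R : Set ℕ} (hR : CanonicallyImmune R) : R.Infinite :=
  let ⟨_, _, hRh⟩ := hR
  hRh.1

theorem CanonicallyImmune.mono {R Q : Set ℕ} (hR : CanonicallyImmune R) (hQR : Q ⊆ R)
    (hQ : Q.Infinite) : CanonicallyImmune Q :=
  let ⟨h, hh, hRh⟩ := hR
  ⟨h, hh, hRh.mono hQR hQ⟩

theorem exists_forall_ge_inter_Ioo_nonempty_or_subset_Iio {α : Type*} [LinearOrder α]
    [NoMaxOrder α] (W : Set α) (a : α) :
    ∃ b, ∀ c ≥ b, (W ∩ Ioo a c).Nonempty ∨ W ⊆ Iio c := by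
  by_cases hW : ∃ w ∈ W, a < w
  · obtain ⟨w, hwW, haw⟩ := hW
    obtain ⟨b, hwb⟩ := exists_gt w
    exact ⟨b, fun c hbc => Or.inl ⟨w, hwW, haw, hwb.trans_le hbc⟩⟩
  · push Not at hW
    obtain ⟨b, hab⟩ := exists_gt a
    exact ⟨b, fun c hbc => Or.inr fun w hw => (hW w hw).trans_lt (hab.trans_le hbc)⟩

theorem Set.Infinite.exists_strictMono_seq_of_gt {R : Set ℕ} (hR : R.Infinite)
    (b : ℕ → ℕ → ℕ) :
    ∃ q : ℕ → ℕ, (∀ k, q k ∈ R) ∧ StrictMono q ∧ ∀ k, b k (q k) < q (k + 1) := by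
  choose next hnextR hnext using hR.exists_gt
  let q : ℕ → ℕ := fun k => Nat.rec (next 0) (fun k qk => next (max qk (b k qk))) k
  have hq_succ : ∀ k, max (q k) (b k (q k)) < q (k + 1) := fun k => hnext _
  refine ⟨q, ?_, strictMono_nat_of_lt_succ fun k => ?_, fun k => ?_⟩
  · rintro (_ | k) <;> exact hnextR _
  · exact (le_max_left _ _).trans_lt (hq_succ k)
  · exact (le_max_right _ _).trans_lt (hq_succ k)

theorem Set.Infinite.exists_subset_effectivelyImmune {R : Set ℕ} (hR : R.Infinite) :
    ∃ Q ⊆ R, EffectivelyImmune Q := by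
  choose b hb using exists_forall_ge_inter_Ioo_nonempty_or_subset_Iio (α := ℕ)
  obtain ⟨q, hqR, hq, hqb⟩ := hR.exists_strictMono_seq_of_gt fun k => b (WSet k)
  refine ⟨range q, range_subset_iff.2 hqR, infinite_range_of_injective hq.injective,
    fun e => e + 1, Computable.succ, fun e he => ?_⟩
  have hgap : (WSet e ∩ Ioo (q e) (q (e + 1))).Nonempty → False := by
    rintro ⟨_, hwW, hlo, hhi⟩
    obtain ⟨i, rfl⟩ := he hwW
    rw [hq.lt_iff_lt] at hlo hhi
    omega
  have hbelow : WSet e ⊆ Iio (q (e + 1)) := (hb _ _ _ (hqb e).le).resolve_left hgap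
  have hsub : WSet e ⊆ ↑((Finset.range (e + 1)).image q) := by
    intro w hw
    obtain ⟨i, rfl⟩ := he hw
    have hi : q i < q (e + 1) := hbelow hw
    rw [hq.lt_iff_lt] at hi
    exact Finset.mem_coe.2 (Finset.mem_image_of_mem q (Finset.mem_range.2 hi))
  refine ⟨(Finset.finite_toSet _).subset hsub, ?_⟩
  calc (WSet e).ncard ≤ ((Finset.range (e + 1)).image q).card := by
        simpa only [ncard_coe_finset] using ncard_le_ncard hsub
    _ ≤ (Finset.range (e + 1)).card := Finset.card_image_le
    _ = e + 1 := Finset.card_range _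

/-- Every canonically immune set contains an infinite subset which is both canonically
immune and effectively immune. -/
theorem canonically_immune_contains_effectively_immune :
    ∀ R : Set ℕ, CanonicallyImmune R →
      ∃ Q : Set ℕ, Q ⊆ R ∧ Q.Infinite ∧ CanonicallyImmune Q ∧ EffectivelyImmune Q := by
  intro R hR
  obtain ⟨Q, hQR, hQ⟩ := hR.infinite.exists_subset_effectivelyImmune
  exact ⟨Q, hQR, hQ.1, hR.mono hQR hQ.1, hQ⟩
end

section
/- For every Mathias condition [a,A] and every canonical numbering D, there is an infinite computable set B ⊆ A such that for all i ≥ |a|, D(i) ⊆ a ∪ B implies |D(i)| ≤ i. -/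
/-! The code of a finite set under Mathlib's numbering of `Finset ℕ` bounds its elements, so
`D i` is bounded by a computable `h i`. Thin `A` out to a computable `B = {b₀ < b₁ < ⋯}` with
`bₙ > h (n + |a|)`. If `i ≥ |a|` and `D i ⊆ a ∪ B`, every element of `D i` lies below
`b_{i - |a|}`, so at most `i - |a|` of them lie in `B`, whence `|D i| ≤ i`. -/

namespace Denumerable

theorem le_add_encode_of_mem_raise' :
    ∀ {l : List ℕ} {n x : ℕ}, x ∈ raise' l n → x ≤ n + Encodable.encode l
  | [], _, _, hx => by simp [raise'] at hx
  | m :: l, n, x, hx => by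
    have hpair := Nat.add_le_pair m (Encodable.encode l)
    rw [raise', List.mem_cons] at hx
    rw [Encodable.encode_list_cons, Encodable.encode_nat]
    rcases hx with rfl | hx
    · omega
    · have := le_add_encode_of_mem_raise' hx
      omega

theorem le_of_mem_ofNat_finset {n x : ℕ} (hx : x ∈ ofNat (Finset ℕ) n) : x ≤ n := by
  have hofNat : ofNat (Finset ℕ) n =
      (raise'Finset (ofNat (List ℕ) n) 0).map (eqv ℕ).symm.toEmbedding :=
    ofNat_of_decode rfl
  rw [hofNat, Finset.mem_map] at hx
  obtain ⟨y, hy, rfl⟩ := hx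
  simpa [eqv, ofNat_nat] using le_add_encode_of_mem_raise' (l := ofNat (List ℕ) n) (n := 0) hy

end Denumerable

theorem Computable.exists_computable_bound_of_mem {D : ℕ → Finset ℕ} (hD : Computable D) :
    ∃ h : ℕ → ℕ, Computable h ∧ ∀ i, ∀ x ∈ D i, x ≤ h i :=
  ⟨fun i => Denumerable.eqv _ (D i), Computable.encode.comp hD, fun i _ hx =>
    Denumerable.le_of_mem_ofNat_finset ((Denumerable.ofNat_encode (D i)).symm ▸ hx)⟩

theorem Set.Infinite.exists_computable_strictMono_gt {A : Set ℕ} (hA : A.Infinite)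
    (hAc : ComputablePred (· ∈ A)) {g : ℕ → ℕ} (hg : Computable g) :
    ∃ b : ℕ → ℕ, Computable b ∧ StrictMono b ∧ ∀ n, b n ∈ A ∧ g n < b n := by
  classical
  let next : ℕ → ℕ := fun m => Nat.find (hA.exists_gt m)
  have next_spec : ∀ m, next m ∈ A ∧ m < next m := fun m => Nat.find_spec (hA.exists_gt m)
  have hnext : Computable next := by
    refine Computable.find (Computable.computablePred ?_) hA.exists_gt
    refine ((Primrec.and.to_comp).comp (hAc.decide.comp Computable.snd)
      (Primrec.nat_lt.decide.to_comp)).of_eq fun p => ?_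
    simp
  let b : ℕ → ℕ := fun n => Nat.rec (next (g 0)) (fun y IH => next (max IH (g (y + 1)))) n
  refine ⟨b, ?_, strictMono_nat_of_lt_succ fun n => ?_, fun n => ?_⟩
  · exact Computable.nat_rec Computable.id (Computable.const _)
      (hnext.comp ((Primrec.nat_max.to_comp).comp (Computable.snd.comp Computable.snd)
        (hg.comp (Computable.succ.comp (Computable.fst.comp Computable.snd))))).to₂
  · exact (le_max_left _ _).trans_lt (next_spec _).2
  · cases n with
    | zero => exact next_spec _
    | succ n => exact ⟨(next_spec _).1, (le_max_right _ _).trans_lt (next_spec _).2⟩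

theorem StrictMono.computablePred_mem_range {b : ℕ → ℕ} (hb : Computable b)
    (hmono : StrictMono b) : ComputablePred (· ∈ Set.range b) := by
  classical
  have hex : ∀ x, ∃ n, x ≤ b n := fun x => ⟨x, hmono.id_le x⟩
  have hfind : Computable fun x => Nat.find (hex x) :=
    Computable.find (P := fun x n => x ≤ b n) (Computable.computablePred <|
      Primrec.nat_le.decide.to_comp.comp Computable.fst (hb.comp Computable.snd)) hex
  refine Computable.computablePred
    ((Primrec.eq.decide.to_comp.comp (hb.comp hfind) Computable.id).of_eq fun x => ?_)
  -- the least `n` with `x ≤ b n` is the only candidate for `b n = x`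
  refine decide_eq_decide.2 ⟨fun h => ⟨_, h⟩, ?_⟩
  rintro ⟨m, rfl⟩
  exact le_antisymm (hmono.monotone (Nat.find_min' _ le_rfl)) (Nat.find_spec (hex (b m)))

theorem StrictMono.card_le_of_subset_union_range {b : ℕ → ℕ} (hb : StrictMono b)
    {s a : Finset ℕ} {n : ℕ} (hs : ↑s ⊆ ↑a ∪ Set.range b) (hlt : ∀ x ∈ s, x < b n) :
    s.card ≤ a.card + n := by
  have hsub : s ⊆ a ∪ (Finset.range n).image b := by
    intro x hx
    rcases hs hx with hxa | ⟨m, rfl⟩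
    · exact Finset.mem_union_left _ hxa
    · exact Finset.mem_union_right _
        (Finset.mem_image_of_mem b (Finset.mem_range.2 (hb.lt_iff_lt.1 (hlt _ hx))))
  calc s.card ≤ (a ∪ (Finset.range n).image b).card := Finset.card_le_card hsub
    _ ≤ a.card + ((Finset.range n).image b).card := Finset.card_union_le _ _
    _ ≤ a.card + n := by grw [Finset.card_image_le, Finset.card_range]

/-- For every Mathias condition `[a,A]` and canonical numbering `D` there is an infinite
computable `B ⊆ A` with: for all `i ≥ |a|`, `D(i) ⊆ a ∪ B` implies `|D(i)| ≤ i`. -/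
theorem exists_good_reservoir :
    ∀ (c : MathiasCond) (D : ℕ → Finset ℕ), CanonicalNumbering D →
      ∃ B : Set ℕ, B ⊆ c.A ∧ B.Infinite ∧ ComputablePred (· ∈ B) ∧
        ∀ i, c.a.card ≤ i → ↑(D i) ⊆ (↑c.a ∪ B : Set ℕ) → (D i).card ≤ i := by
  intro c D hD
  obtain ⟨h, hh, hDh⟩ := hD.1.exists_computable_bound_of_mem
  obtain ⟨b, hb, hmono, hbA⟩ := c.infinite.exists_computable_strictMono_gt c.comp
    (hh.comp (Primrec.nat_add.to_comp.comp Computable.id (Computable.const c.a.card)))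
  refine ⟨Set.range b, Set.range_subset_iff.2 fun n => (hbA n).1,
    Set.infinite_range_of_injective hmono.injective, hmono.computablePred_mem_range hb, ?_⟩
  intro i hi hsub
  have hlt : ∀ x ∈ D i, x < b (i - c.a.card) := fun x hx =>
    (hDh i x hx).trans_lt (by simpa [Nat.sub_add_cancel hi] using (hbA (i - c.a.card)).2)
  have hcard := hmono.card_le_of_subset_union_range hsub hlt
  omega
end
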